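/- Let f, g, u, v be holomorphic functions on 𝔹_N with f(0) = g(0) = u(0) = v(0) = 0, and set φ = f + conj(g), ψ = u + conj(v). If the function z ↦ f(z)·conj(v(z)) − u(z)·conj(g(z)) is pluriharmonic on 𝔹_N, then at least one of the following holds: (i) g ≡ 0 and v ≡ 0 (both φ and ψ are holomorphic); (ii) f ≡ 0 and u ≡ 0 (both φ and ψ are anti-holomorphic); or (iii) there exist c_1, c_2 ∈ ℂ, not both zero, such that c_1·φ(z) + c_2·ψ(z) = 0 for all z ∈ 𝔹_N. -/

import Mathlib

open MeasureTheory Metric Complex ComplexConjugate Finset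
open scoped ENNReal

noncomputable section

/-- `ℂ^N` with its (product) Lebesgue measure; `EuclideanSpace ℂ (Fin N)` is definitionally
`Fin N → ℂ`. -/
instance (N : ℕ) : MeasureSpace (EuclideanSpace ℂ (Fin N)) :=
  ⟨Measure.map (MeasurableEquiv.toLp 2 (Fin N → ℂ)) volume⟩

variable {N : ℕ}

/-- Hermitian inner product `⟨z,w⟩ = Σ z_j conj(w_j)`. -/
def hinner (z w : EuclideanSpace ℂ (Fin N)) : ℂ := ∑ j, z j * conj (w j)

/-- Lebesgue measure on `ℂ^N` normalized so that the unit ball has measure 1. -/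
def volB (N : ℕ) : Measure (EuclideanSpace ℂ (Fin N)) :=
  (volume (ball (0 : EuclideanSpace ℂ (Fin N)) 1))⁻¹ • volume

/-- The Berezin transform of `u`. -/
def berezin (u : EuclideanSpace ℂ (Fin N) → ℂ) (z : EuclideanSpace ℂ (Fin N)) : ℂ :=
  (((1 - ‖z‖ ^ 2) ^ (N + 1) : ℝ) : ℂ) *
    ∫ ξ in ball (0 : EuclideanSpace ℂ (Fin N)) 1,
      u ξ / ((‖1 - hinner z ξ‖ ^ (2 * (N + 1)) : ℝ) : ℂ) ∂(volB N)

/-- Pluriharmonic on the unit ball: sum of a holomorphic and an anti-holomorphic function. -/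
def Pluriharmonic (h : EuclideanSpace ℂ (Fin N) → ℂ) : Prop :=
  ∃ f g : EuclideanSpace ℂ (Fin N) → ℂ,
    DifferentiableOn ℂ f (ball 0 1) ∧ DifferentiableOn ℂ g (ball 0 1) ∧
      ∀ z ∈ ball (0 : EuclideanSpace ℂ (Fin N)) 1, h z = f z + conj (g z)

/-- `B(u)` has finite rank: it is a finite sum `Σ f_j conj(g_j)` with `f_j, g_j` holomorphic. -/
def FiniteRankBerezin (u : EuclideanSpace ℂ (Fin N) → ℂ) : Prop :=
  ∃ (n : ℕ) (f g : Fin n → EuclideanSpace ℂ (Fin N) → ℂ),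
    (∀ j, DifferentiableOn ℂ (f j) (ball 0 1)) ∧
    (∀ j, DifferentiableOn ℂ (g j) (ball 0 1)) ∧
    ∀ z ∈ ball (0 : EuclideanSpace ℂ (Fin N)) 1,
      berezin u z = ∑ j, f j z * conj (g j z)

/-- Wirtinger derivative `∂/∂z_j`. -/
def wdz (j : Fin N) (f : EuclideanSpace ℂ (Fin N) → ℂ) (z : EuclideanSpace ℂ (Fin N)) : ℂ :=
  (1 / 2 : ℂ) * (fderiv ℝ f z (EuclideanSpace.single j 1)
    - Complex.I * fderiv ℝ f z (EuclideanSpace.single j Complex.I))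

/-- Wirtinger derivative `∂/∂conj(z_j)`. -/
def wdzbar (j : Fin N) (f : EuclideanSpace ℂ (Fin N) → ℂ) (z : EuclideanSpace ℂ (Fin N)) : ℂ :=
  (1 / 2 : ℂ) * (fderiv ℝ f z (EuclideanSpace.single j 1)
    + Complex.I * fderiv ℝ f z (EuclideanSpace.single j Complex.I))

/-- The radial operator `E = Σ z_j ∂/∂z_j`. -/
def Eop (f : EuclideanSpace ℂ (Fin N) → ℂ) (z : EuclideanSpace ℂ (Fin N)) : ℂ :=
  ∑ j, z j * wdz j f z

/-- The radial operator `Ē = Σ conj(z_j) ∂/∂conj(z_j)`. -/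
def Ebarop (f : EuclideanSpace ℂ (Fin N) → ℂ) (z : EuclideanSpace ℂ (Fin N)) : ℂ :=
  ∑ j, conj (z j) * wdzbar j f z

/-- The Laplacian `Δ = Σ ∂²/(∂z_j ∂conj(z_j))`. -/
def lapOp (f : EuclideanSpace ℂ (Fin N) → ℂ) (z : EuclideanSpace ℂ (Fin N)) : ℂ :=
  ∑ j, wdz j (wdzbar j f) z

/-- The operator `|E+s|² − Δ = (E+s)∘(Ē+s) − Δ`. -/
def stepOp (s : ℝ) (f : EuclideanSpace ℂ (Fin N) → ℂ) : EuclideanSpace ℂ (Fin N) → ℂ :=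
  fun z => (Eop (fun w => Ebarop f w + (s : ℂ) * f w) z
      + (s : ℂ) * (Ebarop f z + (s : ℂ) * f z)) - lapOp f z

/-- The composition `(|E+m|²−Δ)∘(|E+(m−1)|²−Δ)∘⋯∘(|E+0|²−Δ)`. -/
def iterOp : ℕ → (EuclideanSpace ℂ (Fin N) → ℂ) → (EuclideanSpace ℂ (Fin N) → ℂ)
  | 0 => stepOp 0
  | (m + 1) => fun f => stepOp (m + 1) (iterOp m f)

/-- The invariant Laplacian `Δ̃ = (1−|z|²)(Δ − |E|²)`. -/
def invLap (f : EuclideanSpace ℂ (Fin N) → ℂ) (z : EuclideanSpace ℂ (Fin N)) : ℂ :=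
  (((1 - ‖z‖ ^ 2 : ℝ)) : ℂ) * (lapOp f z - Eop (Ebarop f) z)

/-- The operator `c − Δ̃` (a single factor of `p_m(Δ̃)`). -/
def factorOp (c : ℂ) (f : EuclideanSpace ℂ (Fin N) → ℂ) : EuclideanSpace ℂ (Fin N) → ℂ :=
  fun z => c * f z - invLap f z

/-- The product of operators `∏_{j=0}^{m} (j(j−N) − Δ̃)`. -/
def prodOp (N : ℕ) : ℕ → (EuclideanSpace ℂ (Fin N) → ℂ) → (EuclideanSpace ℂ (Fin N) → ℂ)
  | 0 => factorOp ((0 : ℂ) * ((0 : ℂ) - (N : ℂ)))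
  | (m + 1) => fun f => factorOp (((m : ℂ) + 1) * (((m : ℂ) + 1) - (N : ℂ))) (prodOp N m f)

open Classical in
/-- The Möbius automorphism `φ_w` of the unit ball interchanging `0` and `w`. -/
def mobius (w z : EuclideanSpace ℂ (Fin N)) : EuclideanSpace ℂ (Fin N) :=
  ((1 - hinner z w)⁻¹ : ℂ) •
    (w - (if w = 0 then 0 else (hinner z w / hinner w w) • w)
      - ((Real.sqrt (1 - ‖w‖ ^ 2) : ℝ) : ℂ) •
        (z - (if w = 0 then 0 else (hinner z w / hinner w w) • w)))

open Filter Topology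

/-! Write `f·conj v − u·conj g − P − conj Q = Σₖ φₖ·conj ψₖ` with `φ = (f, −u, −P, −1)` and
`ψ = (v, g, 1, Q)` holomorphic. The kernel `(a, b) ↦ Σₖ φₖ(a)·conj ψₖ(b)` is holomorphic in `a`,
antiholomorphic in `b`, and vanishes on the diagonal. On a complex two-plane through `0`, the
substitution `(a, b) = (x + i y, x − i y)` turns the diagonal into the real points, so the
one-variable identity theorem, applied one coordinate at a time, makes the kernel vanish near `0`,
and then on the whole ball. Putting `a = 0` or `b = 0` shows that `P` and `Q` are constant, whence
`f(a)·conj v(b) = u(a)·conj g(b)` for all `a, b`: the vectors `(f(a), u(a))` and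
`(conj g(b), conj v(b))` are all parallel. -/

theorem Prod.mk_mem_ball_zero_iff {α β : Type*} [SeminormedAddCommGroup α]
    [SeminormedAddCommGroup β] {a : α} {b : β} {r : ℝ} :
    (a, b) ∈ ball (0 : α × β) r ↔ a ∈ ball 0 r ∧ b ∈ ball 0 r := by
  rw [← Prod.mk_zero_zero, ← ball_prod_same, Set.mem_prod]

theorem norm_lt_of_norm_add_lt_of_norm_sub_lt {E : Type*} [SeminormedAddCommGroup E]
    [NormedSpace ℝ E] {x c : E} {r : ℝ} (h₁ : ‖x + c‖ < r) (h₂ : ‖x - c‖ < r) : ‖x‖ < r := by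
  have h := norm_add_le (x + c) (x - c)
  rw [show x + c + (x - c) = (2 : ℝ) • x by module, norm_smul, Real.norm_two] at h
  linarith

theorem DifferentiableOn.eqOn_zero_of_forall_ofReal_eq_zero {φ : ℂ → ℂ} {S : Set ℂ}
    (hφ : DifferentiableOn ℂ φ S) (hS : IsOpen S) (hSc : IsPreconnected S) {x₀ : ℝ}
    (hx₀ : (x₀ : ℂ) ∈ S) (h : ∀ x : ℝ, (x : ℂ) ∈ S → φ x = 0) : Set.EqOn φ 0 S := by
  refine (hφ.analyticOnNhd hS).eqOn_zero_of_preconnected_of_frequently_eq_zero hSc hx₀ ?_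
  have hreal : Tendsto ((↑) : ℝ → ℂ) (𝓝[≠] x₀) (𝓝[≠] (x₀ : ℂ)) :=
    tendsto_nhdsWithin_of_tendsto_nhds_of_eventually_within _
      continuous_ofReal.continuousWithinAt.tendsto
      (eventually_nhdsWithin_of_forall fun x hx => by simpa using hx)
  refine hreal.frequently (Eventually.frequently ?_)
  have hS' : ((↑) : ℝ → ℂ) ⁻¹' S ∈ 𝓝 x₀ := continuous_ofReal.continuousAt (hS.mem_nhds hx₀)
  exact eventually_nhdsWithin_of_eventually_nhds (mem_of_superset hS' fun x hx => h x hx)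

section ComplexLine

variable {V : Type*} [NormedAddCommGroup V] [NormedSpace ℂ V] {K : V → ℂ} {U : Set V}

theorem Convex.setOf_add_smul_mem (hU : Convex ℝ U) (p v : V) :
    Convex ℝ {t : ℂ | p + t • v ∈ U} :=
  (hU.translate_preimage_right p).linear_preimage
    ((LinearMap.toSpanSingleton ℂ V v).restrictScalars ℝ)

theorem IsOpen.setOf_add_smul_mem (hU : IsOpen U) (p v : V) :
    IsOpen {t : ℂ | p + t • v ∈ U} :=
  hU.preimage (by fun_prop)

theorem DifferentiableOn.apply_add_smul_eq_zero_of_forall_ofReal (hK : DifferentiableOn ℂ K U)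
    (hU : IsOpen U) (hUc : Convex ℝ U) (p v : V) {t₀ : ℝ} (ht₀ : p + (t₀ : ℂ) • v ∈ U)
    (h : ∀ t : ℝ, p + (t : ℂ) • v ∈ U → K (p + (t : ℂ) • v) = 0) {t : ℂ}
    (ht : p + t • v ∈ U) : K (p + t • v) = 0 :=
  DifferentiableOn.eqOn_zero_of_forall_ofReal_eq_zero (φ := fun t : ℂ => K (p + t • v))
    (hK.comp (by fun_prop) fun _ hs => hs) (hU.setOf_add_smul_mem p v)
    (hUc.setOf_add_smul_mem p v).isPreconnected ht₀ h ht

theorem DifferentiableOn.eqOn_zero_of_convex_of_eventuallyEq_zero (hK : DifferentiableOn ℂ K U)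
    (hU : IsOpen U) (hUc : Convex ℝ U) {z₀ : V} (hz₀ : z₀ ∈ U) (h : K =ᶠ[𝓝 z₀] 0) :
    Set.EqOn K 0 U := by
  intro z hz
  let γ : ℂ → V := fun t => z₀ + t • (z - z₀)
  have hγ : Differentiable ℂ γ := by fun_prop
  have hline : Set.EqOn (K ∘ γ) 0 (γ ⁻¹' U) :=
    ((hK.comp hγ.differentiableOn fun _ hs => hs).analyticOnNhd
      (hU.setOf_add_smul_mem _ _)).eqOn_zero_of_preconnected_of_eventuallyEq_zero
      (hUc.setOf_add_smul_mem _ _).isPreconnected (z₀ := 0) (by simpa [γ] using hz₀ : γ 0 ∈ U)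
      (h.comp_tendsto (hγ.continuous.tendsto' 0 z₀ (by simp [γ])))
  simpa [γ] using hline (x := 1) (by simpa [γ] using hz)

end ComplexLine

theorem apply_eq_zero_of_apply_conj_eq_zero {K : ℂ × ℂ → ℂ} {r : ℝ}
    (hK : DifferentiableOn ℂ K (ball 0 r)) (h : ∀ z ∈ ball (0 : ℂ) r, K (z, conj z) = 0) :
    ∀ p ∈ ball (0 : ℂ × ℂ) r, K p = 0 := by
  have hline := hK.apply_add_smul_eq_zero_of_forall_ofReal isOpen_ball (convex_ball 0 r)
  have hx : ∀ x y : ℂ, ((I * y, -(I * y)) : ℂ × ℂ) + x • (1, 1) = (x + I * y, x - I * y) :=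
    fun x y => by
      simp only [Prod.smul_mk, smul_eq_mul, Prod.mk_add_mk, Prod.mk.injEq]; constructor <;> ring
  have hy : ∀ x y : ℂ, ((x, x) : ℂ × ℂ) + y • (I, -I) = (x + I * y, x - I * y) :=
    fun x y => by
      simp only [Prod.smul_mk, smul_eq_mul, Prod.mk_add_mk, Prod.mk.injEq]; constructor <;> ring
  have bound : ∀ x y : ℂ, (x + I * y, x - I * y) ∈ ball (0 : ℂ × ℂ) r →
      x ∈ ball 0 r ∧ I * y ∈ ball 0 r := by
    intro x y hxy
    rw [Prod.mk_mem_ball_zero_iff] at hxy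
    simp only [mem_ball_zero_iff] at hxy ⊢
    exact ⟨norm_lt_of_norm_add_lt_of_norm_sub_lt hxy.1 hxy.2,
      norm_lt_of_norm_add_lt_of_norm_sub_lt (c := x) (by rw [add_comm]; exact hxy.1)
        (by rw [norm_sub_rev]; exact hxy.2)⟩
  have real_y : ∀ (x : ℂ) (y : ℝ), (x + I * y, x - I * y) ∈ ball (0 : ℂ × ℂ) r →
      K (x + I * y, x - I * y) = 0 := by
    intro x y hxy
    have hIy := (bound x y hxy).2
    rw [← hx] at hxy ⊢
    refine hline _ _ (t₀ := 0) ?_ (fun t ht => ?_) hxy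
    · simpa [hx, Prod.mk_mem_ball_zero_iff] using hIy
    · rw [hx] at ht ⊢
      have hc : conj ((t : ℂ) + I * y) = t - I * y := by simp [sub_eq_add_neg]
      exact hc ▸ h _ (Prod.mk_mem_ball_zero_iff.1 ht).1
  have all : ∀ x y : ℂ, (x + I * y, x - I * y) ∈ ball (0 : ℂ × ℂ) r →
      K (x + I * y, x - I * y) = 0 := by
    intro x y hxy
    have hx := (bound x y hxy).1
    rw [← hy] at hxy ⊢
    refine hline _ _ (t₀ := 0) ?_ (fun t ht => ?_) hxy
    · simpa [hy, Prod.mk_mem_ball_zero_iff] using hx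
    · rw [hy] at ht ⊢
      exact real_y x t ht
  rintro ⟨a, b⟩ hab
  have hab' : ((a + b) / 2 + I * ((a - b) / (2 * I)), (a + b) / 2 - I * ((a - b) / (2 * I)))
      = (a, b) := by
    ext <;> field_simp <;> ring
  rw [← hab'] at hab ⊢
  exact all _ _ hab

theorem apply_eq_zero_of_apply_star_eq_zero {K : (ℂ × ℂ) × (ℂ × ℂ) → ℂ} {r : ℝ}
    (hK : DifferentiableOn ℂ K (ball 0 r)) (h : ∀ p ∈ ball (0 : ℂ × ℂ) r, K (p, star p) = 0) :
    ∀ q ∈ ball (0 : (ℂ × ℂ) × (ℂ × ℂ)) r, K q = 0 := by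
  have hmem : ∀ a b c d : ℂ, ((a, b), (c, d)) ∈ ball (0 : (ℂ × ℂ) × (ℂ × ℂ)) r ↔
      (a, c) ∈ ball (0 : ℂ × ℂ) r ∧ (b, d) ∈ ball (0 : ℂ × ℂ) r := by
    simp only [Prod.mk_mem_ball_zero_iff]
    tauto
  have hfst : ∀ y ∈ ball (0 : ℂ) r, ∀ p ∈ ball (0 : ℂ × ℂ) r,
      K ((p.1, y), (p.2, conj y)) = 0 := by
    intro y hy
    refine apply_eq_zero_of_apply_conj_eq_zero
      (hK.comp (f := fun p : ℂ × ℂ => ((p.1, y), (p.2, conj y))) (by fun_prop) ?_)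
      fun z hz => h (z, y) (Prod.mk_mem_ball_zero_iff.2 ⟨hz, hy⟩)
    exact fun p hp => (hmem _ _ _ _).2 ⟨hp, by simpa [Prod.mk_mem_ball_zero_iff] using hy⟩
  rintro ⟨⟨a, b⟩, ⟨c, d⟩⟩ hq
  rw [hmem] at hq
  exact apply_eq_zero_of_apply_conj_eq_zero
    (hK.comp (f := fun p : ℂ × ℂ => ((a, p.1), (c, p.2))) (by fun_prop)
      fun p hp => (hmem _ _ _ _).2 ⟨hq.1, hp⟩)
    (fun y hy => hfst y hy (a, c) hq.1) (b, d) hq.2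

section Polarization

variable {E : Type*} [NormedAddCommGroup E] [NormedSpace ℂ E] {ι : Type*} [Fintype ι]
  {φ ψ : ι → E → ℂ} {r : ℝ}

theorem sum_mul_conj_eq_zero_of_mem_ball_div_four
    (hφ : ∀ k, DifferentiableOn ℂ (φ k) (ball 0 r))
    (hψ : ∀ k, DifferentiableOn ℂ (ψ k) (ball 0 r))
    (h : ∀ a ∈ ball (0 : E) r, ∑ k, φ k a * conj (ψ k a) = 0) {z w : E}
    (hz : z ∈ ball (0 : E) (r / 4)) (hw : w ∈ ball (0 : E) (r / 4)) :
    ∑ k, φ k z * conj (ψ k w) = 0 := by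
  let L : ℂ × ℂ →L[ℂ] E :=
    (ContinuousLinearMap.toSpanSingleton ℂ z).coprod (ContinuousLinearMap.toSpanSingleton ℂ w)
  have hL : ∀ p ∈ ball (0 : ℂ × ℂ) 2, L p ∈ ball (0 : E) r := by
    rintro ⟨a, b⟩ hab
    rw [Prod.mk_mem_ball_zero_iff] at hab
    simp only [mem_ball_zero_iff] at hab hz hw
    have := norm_add_le (a • z) (b • w)
    rw [norm_smul, norm_smul] at this
    rw [mem_ball_zero_iff]
    simp only [L, ContinuousLinearMap.coprod_apply, ContinuousLinearMap.toSpanSingleton_apply]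
    nlinarith [norm_nonneg z, norm_nonneg w, norm_nonneg a, norm_nonneg b]
  have hφL : ∀ k, ∀ p ∈ ball (0 : ℂ × ℂ) 2, DifferentiableAt ℂ (fun p => φ k (L p)) p :=
    fun k p hp =>
      ((hφ k).differentiableAt (isOpen_ball.mem_nhds (hL p hp))).comp p L.differentiableAt
  have hψL : ∀ k, ∀ p ∈ ball (0 : ℂ × ℂ) 2,
      DifferentiableAt ℂ (fun p => conj (ψ k (L (star p)))) p := by
    intro k p hp
    have hLp := hL (star p) (by simpa using hp)
    have := (((hψ k).differentiableAt (isOpen_ball.mem_nhds hLp)).comp (star p)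
      L.differentiableAt).star_star
    rwa [star_star] at this
  have := apply_eq_zero_of_apply_star_eq_zero (r := 2)
    (K := fun pq => ∑ k, φ k (L pq.1) * conj (ψ k (L (star pq.2)))) ?_ ?_ ((1, 0), (0, 1)) ?_
  · simpa [L] using this
  · rintro ⟨p, q⟩ hpq
    rw [Prod.mk_mem_ball_zero_iff] at hpq
    refine (DifferentiableAt.fun_sum fun k _ => ?_).differentiableWithinAt
    exact ((hφL k p hpq.1).comp (f := Prod.fst) (p, q) differentiableAt_fst).mul
      ((hψL k q hpq.2).comp (f := Prod.snd) (p, q) differentiableAt_snd)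
  · intro p hp
    simpa using h (L p) (hL p hp)
  · simp

theorem sum_mul_conj_eq_zero
    (hφ : ∀ k, DifferentiableOn ℂ (φ k) (ball 0 r))
    (hψ : ∀ k, DifferentiableOn ℂ (ψ k) (ball 0 r))
    (h : ∀ a ∈ ball (0 : E) r, ∑ k, φ k a * conj (ψ k a) = 0) {z w : E}
    (hz : z ∈ ball (0 : E) r) (hw : w ∈ ball (0 : E) r) :
    ∑ k, φ k z * conj (ψ k w) = 0 := by
  have h₀ : (0 : E) ∈ ball 0 r := mem_ball_self (pos_of_mem_ball hz)
  have hsmall : ball (0 : E) (r / 4) ∈ 𝓝 0 := ball_mem_nhds 0 (by linarith [pos_of_mem_ball hz])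
  have hw_small : ∀ w ∈ ball (0 : E) (r / 4), ∀ z ∈ ball (0 : E) r,
      ∑ k, φ k z * conj (ψ k w) = 0 := fun w hw =>
    DifferentiableOn.eqOn_zero_of_convex_of_eventuallyEq_zero
      (DifferentiableOn.fun_sum fun k _ => (hφ k).mul_const _) isOpen_ball (convex_ball 0 r) h₀
      (mem_of_superset hsmall fun a ha => sum_mul_conj_eq_zero_of_mem_ball_div_four hφ hψ h ha hw)
  have := DifferentiableOn.eqOn_zero_of_convex_of_eventuallyEq_zero
    (DifferentiableOn.fun_sum fun k _ => (hψ k).const_mul (conj (φ k z))) isOpen_ball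
    (convex_ball 0 r) h₀
    (mem_of_superset hsmall fun b hb => by simpa using congrArg conj (hw_small b hb z hz)) hw
  simpa using congrArg conj this

end Polarization

theorem mul_conj_eq_mul_conj_of_pluriharmonic {N : ℕ} {f g u v : EuclideanSpace ℂ (Fin N) → ℂ}
    (hf : DifferentiableOn ℂ f (ball 0 1)) (hg : DifferentiableOn ℂ g (ball 0 1))
    (hu : DifferentiableOn ℂ u (ball 0 1)) (hv : DifferentiableOn ℂ v (ball 0 1))
    (hf0 : f 0 = 0) (hg0 : g 0 = 0) (hu0 : u 0 = 0) (hv0 : v 0 = 0)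
    (hph : Pluriharmonic (fun z => f z * conj (v z) - u z * conj (g z))) :
    ∀ a ∈ ball (0 : EuclideanSpace ℂ (Fin N)) 1, ∀ b ∈ ball (0 : EuclideanSpace ℂ (Fin N)) 1,
      f a * conj (v b) = u a * conj (g b) := by
  obtain ⟨P, Q, hP, hQ, hPQ⟩ := hph
  have H : ∀ a ∈ ball (0 : EuclideanSpace ℂ (Fin N)) 1, ∀ b ∈ ball (0 : EuclideanSpace ℂ (Fin N)) 1,
      f a * conj (v b) - u a * conj (g b) - P a - conj (Q b) = 0 := by
    intro a ha b hb
    have := sum_mul_conj_eq_zero (φ := ![f, -u, -P, -1]) (ψ := ![v, g, 1, Q]) ?_ ?_ ?_ ha hb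
    · simpa [Fin.sum_univ_four, sub_eq_add_neg] using this
    · intro k
      fin_cases k
      exacts [hf, hu.neg, hP.neg, differentiableOn_const (-1)]
    · intro k
      fin_cases k
      exacts [hv, hg, differentiableOn_const 1, hQ]
    · intro c hc
      simp only [Fin.sum_univ_four, Matrix.cons_val_zero, Matrix.cons_val_one, Matrix.cons_val,
        Pi.neg_apply, Pi.one_apply, map_one, mul_one, neg_mul]
      linear_combination hPQ c hc
  have h₀ : (0 : EuclideanSpace ℂ (Fin N)) ∈ ball 0 1 := mem_ball_self one_pos
  intro a ha b hb
  have ha0 := H a ha 0 h₀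
  have h0b := H 0 h₀ b hb
  have h00 := H 0 h₀ 0 h₀
  simp only [hf0, hg0, hu0, hv0, map_zero, mul_zero, zero_mul] at ha0 h0b h00
  linear_combination H a ha b hb - ha0 - h0b + h00

theorem trichotomy_of_mul_conj_eq_mul_conj {α : Type*} {S : Set α} {f g u v : α → ℂ}
    (h : ∀ a ∈ S, ∀ b ∈ S, f a * conj (v b) = u a * conj (g b)) :
    ((∀ z ∈ S, g z = 0) ∧ (∀ z ∈ S, v z = 0)) ∨
    ((∀ z ∈ S, f z = 0) ∧ (∀ z ∈ S, u z = 0)) ∨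
    (∃ c₁ c₂ : ℂ, ¬(c₁ = 0 ∧ c₂ = 0) ∧
      ∀ z ∈ S, c₁ * (f z + conj (g z)) + c₂ * (u z + conj (v z)) = 0) := by
  by_cases hgv : ∀ b ∈ S, g b = 0 ∧ v b = 0
  · exact Or.inl ⟨fun b hb => (hgv b hb).1, fun b hb => (hgv b hb).2⟩
  by_cases hfu : ∀ a ∈ S, f a = 0 ∧ u a = 0
  · exact Or.inr (Or.inl ⟨fun a ha => (hfu a ha).1, fun a ha => (hfu a ha).2⟩)
  push Not at hgv hfu
  obtain ⟨b₀, hb₀, hgv₀⟩ := hgv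
  obtain ⟨a₀, ha₀, hfu₀⟩ := hfu
  refine Or.inr (Or.inr ⟨conj (v b₀), -conj (g b₀), ?_, fun z hz => ?_⟩)
  · simpa [imp_iff_not_or, or_comm] using hgv₀
  have hparallel : conj (v b₀) * conj (g z) = conj (g b₀) * conj (v z) := by
    have e₁ := h a₀ ha₀ z hz
    have e₂ := h a₀ ha₀ b₀ hb₀
    by_cases hf : f a₀ = 0
    · refine mul_left_cancel₀ (hfu₀ hf) ?_
      linear_combination conj (v z) * e₂ - conj (v b₀) * e₁
    · refine mul_left_cancel₀ hf ?_
      linear_combination conj (g z) * e₂ - conj (g b₀) * e₁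
  linear_combination h z hz b₀ hb₀ + hparallel

theorem stmt17_general {N : ℕ}
    (f g u v : EuclideanSpace ℂ (Fin N) → ℂ)
    (hf : DifferentiableOn ℂ f (ball 0 1))
    (hg : DifferentiableOn ℂ g (ball 0 1))
    (hu : DifferentiableOn ℂ u (ball 0 1))
    (hv : DifferentiableOn ℂ v (ball 0 1))
    (hf0 : f 0 = 0) (hg0 : g 0 = 0) (hu0 : u 0 = 0) (hv0 : v 0 = 0)
    (hph : Pluriharmonic (fun z => f z * conj (v z) - u z * conj (g z))) :
    ((∀ z ∈ ball (0 : EuclideanSpace ℂ (Fin N)) 1, g z = 0) ∧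
      (∀ z ∈ ball (0 : EuclideanSpace ℂ (Fin N)) 1, v z = 0)) ∨
    ((∀ z ∈ ball (0 : EuclideanSpace ℂ (Fin N)) 1, f z = 0) ∧
      (∀ z ∈ ball (0 : EuclideanSpace ℂ (Fin N)) 1, u z = 0)) ∨
    (∃ c₁ c₂ : ℂ, ¬(c₁ = 0 ∧ c₂ = 0) ∧
      ∀ z ∈ ball (0 : EuclideanSpace ℂ (Fin N)) 1,
        c₁ * (f z + conj (g z)) + c₂ * (u z + conj (v z)) = 0) :=
  trichotomy_of_mul_conj_eq_mul_conj
    (mul_conj_eq_mul_conj_of_pluriharmonic hf hg hu hv hf0 hg0 hu0 hv0 hph)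

/-- function-theoretic content of Corollary 1.3: if
`f·conj(v) − u·conj(g)` is pluriharmonic (with all functions vanishing at 0), then `φ, ψ` are
both holomorphic, both anti-holomorphic, or linearly dependent. -/
theorem stmt17 {N : ℕ} (hN : 1 ≤ N)
    (f g u v : EuclideanSpace ℂ (Fin N) → ℂ)
    (hf : DifferentiableOn ℂ f (ball 0 1))
    (hg : DifferentiableOn ℂ g (ball 0 1))
    (hu : DifferentiableOn ℂ u (ball 0 1))
    (hv : DifferentiableOn ℂ v (ball 0 1))
    (hf0 : f 0 = 0) (hg0 : g 0 = 0) (hu0 : u 0 = 0) (hv0 : v 0 = 0)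
    (hph : Pluriharmonic (fun z => f z * conj (v z) - u z * conj (g z))) :
    ((∀ z ∈ ball (0 : EuclideanSpace ℂ (Fin N)) 1, g z = 0) ∧
      (∀ z ∈ ball (0 : EuclideanSpace ℂ (Fin N)) 1, v z = 0)) ∨
    ((∀ z ∈ ball (0 : EuclideanSpace ℂ (Fin N)) 1, f z = 0) ∧
      (∀ z ∈ ball (0 : EuclideanSpace ℂ (Fin N)) 1, u z = 0)) ∨
    (∃ c₁ c₂ : ℂ, ¬(c₁ = 0 ∧ c₂ = 0) ∧
      ∀ z ∈ ball (0 : EuclideanSpace ℂ (Fin N)) 1,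
        c₁ * (f z + conj (g z)) + c₂ * (u z + conj (v z)) = 0) :=
  stmt17_general f g u v hf hg hu hv hf0 hg0 hu0 hv0 hph
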